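/- Fix k ≥ 3 and ℓ ≥ 5, and let C(k,ℓ) be the hypergraph of the preceding construction (extending the edges of K_ℓ − c₁c₂ to k-sets as specified). Then every set of ℓ − 1 vertices of C(k,ℓ) is the set of core vertices of a Berge-K_{ℓ−1} in C(k,ℓ). -/

import Mathlib

/-! Every vertex of `D` lies in every edge, so the `D`-vertices of `X` can be traded injectively
for `c`-vertices outside `X` without losing any incidence. This reduces the claim to the cores
`{c₁, …, c_ℓ} ∖ {c_m}`. There every pair uses the edge extending it, except `c₁c₂`, which has
none: it borrows the edge `{c₁, c_m, c₂} ∪ D` of the pair `c₁c_m`, which is not a core pair. -/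

/-- A Berge edge map for a clique on core vertex set `core` in a hypergraph `H`:
an assignment of distinct hyperedges to the pairs of distinct core vertices,
each pair contained in its assigned hyperedge. -/
def BergeCliqueMap {V : Type*} (H : Finset (Finset V)) (core : Finset V)
    (φ : Sym2 V → Finset V) : Prop :=
  Set.InjOn φ {p : Sym2 V | ∃ x ∈ core, ∃ y ∈ core, x ≠ y ∧ p = s(x, y)} ∧
  ∀ x ∈ core, ∀ y ∈ core, x ≠ y →
    φ s(x, y) ∈ H ∧ x ∈ φ s(x, y) ∧ y ∈ φ s(x, y)

/-- `H` contains a Berge-`K_l` with the given set of core vertices. -/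
def HasBergeCliqueOn {V : Type*} (H : Finset (Finset V)) (core : Finset V) : Prop :=
  ∃ φ : Sym2 V → Finset V, BergeCliqueMap H core φ

/-- `H` contains a Berge-`K_l`. -/
def HasBergeClique {V : Type*} (l : ℕ) (H : Finset (Finset V)) : Prop :=
  ∃ core : Finset V, core.card = l ∧ HasBergeCliqueOn H core

/-- `H` contains a Berge-`K_l` using the hyperedge `e`. -/
def HasBergeCliqueUsing {V : Type*} (l : ℕ) (H : Finset (Finset V)) (e : Finset V) : Prop :=
  ∃ core : Finset V, core.card = l ∧ ∃ φ : Sym2 V → Finset V,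
    BergeCliqueMap H core φ ∧ ∃ x ∈ core, ∃ y ∈ core, x ≠ y ∧ φ s(x, y) = e

/-- The index of the extra `c`-vertex used to extend the pair `{i,j}` (an edge of
`K_ℓ − c₁c₂`, where `c₁,...,c₅` have indices `0,...,4`) to a `k`-set, following the
construction: a pair containing `c₁` but not `c₂` gets `c₂`; `{c₂,c₃}` gets `c₄`;
`{c₂,c₄}` gets `c₅`; a pair containing `c₂` but none of `c₁,c₃,c₄` gets `c₃`;
a pair avoiding `c₁,c₂` gets `c₁`. -/
def extraIdx (i j : ℕ) : ℕ :=
  if (i = 0 ∨ j = 0) ∧ ¬(i = 1 ∨ j = 1) then 1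
  else if (i = 1 ∧ j = 2) ∨ (i = 2 ∧ j = 1) then 3
  else if (i = 1 ∧ j = 3) ∨ (i = 3 ∧ j = 1) then 4
  else if i = 1 ∨ j = 1 then 2
  else 0

/-- The hyperedge of `C(k,l)` obtained by extending the pair `{i,j}`:
`{cᵢ, cⱼ, c_{extraIdx i j}} ∪ D`, where `D = {l, l+1, ..., l+k-4}` (so `|D| = k-3`). -/
def C5edge (k l i j : ℕ) : Finset ℕ :=
  ({i, j, extraIdx i j} : Finset ℕ) ∪ Finset.Ico l (l + (k - 3))

/-- The hyperedges of `C(k,l)` for `l ≥ 5`: one `k`-edge for each edge of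
`K_l − c₁c₂` (vertices `0,...,l-1` are `c₁,...,c_l`). -/
def C5edges (k l : ℕ) : Finset (Finset ℕ) :=
  (((Finset.range l) ×ˢ (Finset.range l)).filter
      (fun p => p.1 < p.2 ∧ ¬(p.1 = 0 ∧ p.2 = 1))).image
    (fun p => C5edge k l p.1 p.2)

/-- The vertex set of `C(k,l)` for `l ≥ 5`. -/
def C5verts (k l : ℕ) : Finset ℕ := Finset.range (l + (k - 3))

open Finset

theorem Finset.exists_injOn_mapsTo_of_card_le {α : Type*} [DecidableEq α] {X A : Finset α}
    (h : #X ≤ #A) :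
    ∃ ψ : α → α, Set.InjOn ψ X ∧ Set.MapsTo ψ X A ∧ ∀ x ∈ A, ψ x = x := by
  rcases isEmpty_or_nonempty α with hα | hα
  · exact ⟨id, Set.injOn_id _, fun x => isEmptyElim x, fun x => isEmptyElim x⟩
  have hcard : #(X \ A) ≤ #(A \ X) := by
    have := card_sdiff_add_card_inter X A
    have := card_sdiff_add_card_inter A X
    rw [inter_comm] at this
    omega
  obtain ⟨f, hf_maps, hf_inj⟩ := Set.Finite.exists_injOn_of_encard_le
    (t := ((A \ X : Finset α) : Set α)) (X \ A : Finset α).finite_toSet (by exact_mod_cast hcard)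
  have hfX : ∀ x ∈ X, x ∉ A → f x ∈ A \ X := fun x hx hxA =>
    hf_maps (by simp [hx, hxA])
  refine ⟨(A : Set α).piecewise id f, ?_, ?_, fun x hx => Set.piecewise_eq_of_mem _ _ _ hx⟩
  · intro x hx y hy hxy
    by_cases hxA : x ∈ A <;> by_cases hyA : y ∈ A <;>
      simp only [Set.piecewise, mem_coe, hxA, hyA, if_true, if_false, id] at hxy
    · exact hxy
    · exact ((mem_sdiff.mp (hfX y hy hyA)).2 (hxy ▸ hx)).elim
    · exact ((mem_sdiff.mp (hfX x hx hxA)).2 (hxy ▸ hy)).elim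
    · exact hf_inj (by simp_all) (by simp_all) hxy
  · intro x hx
    by_cases hxA : x ∈ A
    · simp [Set.piecewise, hxA]
    · simpa [Set.piecewise, hxA] using (mem_sdiff.mp (hfX x hx hxA)).1

theorem HasBergeCliqueOn.of_injOn {V : Type*} {H : Finset (Finset V)} {X Y : Finset V}
    {ψ : V → V} (hY : HasBergeCliqueOn H Y) (hinj : Set.InjOn ψ X) (hmaps : Set.MapsTo ψ X Y)
    (hmem : ∀ x ∈ X, ∀ e ∈ H, ψ x ∈ e → x ∈ e) : HasBergeCliqueOn H X := by
  obtain ⟨φ, hφinj, hφ⟩ := hY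
  have hne : ∀ x ∈ X, ∀ y ∈ X, x ≠ y → ψ x ≠ ψ y := fun x hx y hy hxy h => hxy (hinj hx hy h)
  refine ⟨φ ∘ Sym2.map ψ, ?_, fun x hx y hy hxy => ?_⟩
  · rintro _ ⟨x, hx, y, hy, hxy, rfl⟩ _ ⟨u, hu, v, hv, huv, rfl⟩ h
    have h' := hφinj ⟨_, hmaps hx, _, hmaps hy, hne x hx y hy hxy, rfl⟩
      ⟨_, hmaps hu, _, hmaps hv, hne u hu v hv huv, rfl⟩ h
    rcases Sym2.eq_iff.mp h' with ⟨h1, h2⟩ | ⟨h1, h2⟩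
    · rw [hinj hx hu h1, hinj hy hv h2]
    · rw [hinj hx hv h1, hinj hy hu h2, Sym2.eq_swap]
  · obtain ⟨he, hxe, hye⟩ := hφ _ (hmaps hx) _ (hmaps hy) (hne x hx y hy hxy)
    exact ⟨he, hmem x hx _ he hxe, hmem y hy _ he hye⟩

theorem extraIdx_comm (i j : ℕ) : extraIdx i j = extraIdx j i := by
  simp only [extraIdx, or_comm, and_comm]

theorem extraIdx_cases {i j : ℕ} (hij : i < j) (h01 : ¬(i = 0 ∧ j = 1)) :
    (i = 0 ∧ 2 ≤ j ∧ extraIdx i j = 1) ∨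
    (i = 1 ∧ j = 2 ∧ extraIdx i j = 3) ∨
    (i = 1 ∧ j = 3 ∧ extraIdx i j = 4) ∨
    (i = 1 ∧ 4 ≤ j ∧ extraIdx i j = 2) ∨
    (2 ≤ i ∧ extraIdx i j = 0) := by
  unfold extraIdx
  split_ifs
  · exact Or.inl (by omega)
  · exact Or.inr (Or.inl (by omega))
  · exact Or.inr (Or.inr (Or.inl (by omega)))
  · exact Or.inr (Or.inr (Or.inr (Or.inl (by omega))))
  · exact Or.inr (Or.inr (Or.inr (Or.inr (by omega))))

theorem C5edge_comm (k l i j : ℕ) : C5edge k l i j = C5edge k l j i := by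
  rw [C5edge, C5edge, extraIdx_comm, Finset.insert_comm]

theorem mem_C5edge {k l i j x : ℕ} :
    x ∈ C5edge k l i j ↔ x = i ∨ x = j ∨ x = extraIdx i j ∨ (l ≤ x ∧ x < l + (k - 3)) := by
  simp [C5edge]

theorem Ico_subset_of_mem_C5edges {k l : ℕ} {e : Finset ℕ} (he : e ∈ C5edges k l) :
    Ico l (l + (k - 3)) ⊆ e := by
  obtain ⟨p, -, rfl⟩ := mem_image.mp he
  exact subset_union_right

theorem C5edge_mem_C5edges {k l i j : ℕ} (hi : i < l) (hj : j < l) (hij : i ≠ j)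
    (h01 : s(i, j) ≠ s(0, 1)) : C5edge k l i j ∈ C5edges k l := by
  wlog h : i < j generalizing i j
  · rw [C5edge_comm]
    exact this hj hi hij.symm (by rwa [Sym2.eq_swap]) (by omega)
  refine mem_image.mpr ⟨(i, j), ?_, rfl⟩
  simp only [mem_filter, mem_product, mem_range]
  exact ⟨⟨hi, hj⟩, h, fun ⟨h0, h1⟩ => h01 (by rw [h0, h1])⟩

/-- As `l ≥ 5`, the extra vertex is a `c`-vertex, so the trace of the edge on `c₁, …, c_l` is the
triple `{a, b, extraIdx a b}`; these triples are pairwise distinct. -/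
theorem C5edge_inj_of_lt {k l a b c d : ℕ} (hl : 5 ≤ l) (hab : a < b) (hbl : b < l)
    (hcd : c < d) (hdl : d < l) (h01ab : ¬(a = 0 ∧ b = 1)) (h01cd : ¬(c = 0 ∧ d = 1))
    (h : C5edge k l a b = C5edge k l c d) : a = c ∧ b = d := by
  have H : ∀ x < l, (x = a ∨ x = b ∨ x = extraIdx a b) ↔ (x = c ∨ x = d ∨ x = extraIdx c d) := by
    intro x hx
    have := congrArg (x ∈ ·) h
    simp only [mem_C5edge, eq_iff_iff] at this
    omega
  have := H a (by omega); have := H b (by omega); have := H c (by omega); have := H d (by omega)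
  have := H 0 (by omega); have := H 1 (by omega); have := H 2 (by omega)
  have := H 3 (by omega); have := H 4 (by omega)
  rcases extraIdx_cases hab h01ab with ⟨_, _, _⟩ | ⟨_, _, _⟩ | ⟨_, _, _⟩ | ⟨_, _, _⟩ | ⟨_, _⟩ <;>
    rcases extraIdx_cases hcd h01cd with ⟨_, _, _⟩ | ⟨_, _, _⟩ | ⟨_, _, _⟩ | ⟨_, _, _⟩ | ⟨_, _⟩ <;>
    omega

theorem C5edge_inj {k l a b c d : ℕ} (hl : 5 ≤ l) (ha : a < l) (hb : b < l) (hab : a ≠ b)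
    (h01ab : s(a, b) ≠ s(0, 1)) (hc : c < l) (hd : d < l) (hcd : c ≠ d)
    (h01cd : s(c, d) ≠ s(0, 1)) (h : C5edge k l a b = C5edge k l c d) : s(a, b) = s(c, d) := by
  wlog hab' : a < b generalizing a b
  · rw [Sym2.eq_swap]
    exact this hb ha hab.symm (by rwa [Sym2.eq_swap]) (by rwa [C5edge_comm]) (by omega)
  wlog hcd' : c < d generalizing c d
  · rw [Sym2.eq_swap (a := c)]
    exact this hd hc hcd.symm (by rwa [Sym2.eq_swap]) (by rwa [C5edge_comm k l d]) (by omega)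
  obtain ⟨rfl, rfl⟩ := C5edge_inj_of_lt hl hab' hb hcd' hd
    (fun ⟨h0, h1⟩ => h01ab (by rw [h0, h1])) (fun ⟨h0, h1⟩ => h01cd (by rw [h0, h1])) h
  rfl

theorem hasBergeCliqueOn_C5edges_erase (k : ℕ) {l m : ℕ} (hl : 5 ≤ l) (hm : m < l) :
    HasBergeCliqueOn (C5edges k l) ((range l).erase m) := by
  let E : Sym2 ℕ → Finset ℕ := Sym2.lift ⟨C5edge k l, C5edge_comm k l⟩
  let ρ : Sym2 ℕ → Sym2 ℕ := fun p => if p = s(0, 1) then s(0, m) else p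
  have hρ : ∀ x ∈ (range l).erase m, ∀ y ∈ (range l).erase m, x ≠ y → ∃ a b,
      ρ s(x, y) = s(a, b) ∧ a < l ∧ b < l ∧ a ≠ b ∧ s(a, b) ≠ s(0, 1) ∧
        x ∈ C5edge k l a b ∧ y ∈ C5edge k l a b := by
    intro x hx y hy hxy
    simp only [mem_erase, mem_range] at hx hy
    by_cases h : s(x, y) = s(0, 1)
    · have hxy01 : x = 0 ∧ y = 1 ∨ x = 1 ∧ y = 0 := by simpa using h
      have he : extraIdx 0 m = 1 := by
        rcases extraIdx_cases (i := 0) (j := m) (by omega) (by omega) with h | h | h | h | h <;>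
          omega
      refine ⟨0, m, if_pos h, by omega, hm, by omega, by rw [Ne, Sym2.eq_iff]; omega, ?_, ?_⟩ <;>
        rw [mem_C5edge, he] <;> omega
    · exact ⟨x, y, if_neg h, hx.2, hy.2, hxy, h, by simp [mem_C5edge], by simp [mem_C5edge]⟩
  refine ⟨E ∘ ρ, ?_, fun x hx y hy hxy => ?_⟩
  · rintro _ ⟨x, hx, y, hy, hxy, rfl⟩ _ ⟨u, hu, v, hv, huv, rfl⟩ h
    obtain ⟨a, b, hρab, ha, hb, hab, h01ab, -⟩ := hρ x hx y hy hxy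
    obtain ⟨c, d, hρcd, hc, hd, hcd, h01cd, -⟩ := hρ u hu v hv huv
    have hρeq : ρ s(x, y) = ρ s(u, v) := by
      rw [hρab, hρcd]
      refine C5edge_inj (k := k) hl ha hb hab h01ab hc hd hcd h01cd ?_
      simpa [E, hρab, hρcd] using h
    simp only [mem_erase, mem_range] at hx hy hu hv
    by_cases h1 : s(x, y) = s(0, 1) <;> by_cases h2 : s(u, v) = s(0, 1) <;>
      simp only [ρ, h1, h2, if_true, if_false] at hρeq
    · rw [h1, h2]
    · rw [Sym2.eq_iff] at hρeq
      omega
    · rw [Sym2.eq_iff] at hρeq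
      omega
    · exact hρeq
  · obtain ⟨a, b, hρab, ha, hb, hab, h01ab, hxe, hye⟩ := hρ x hx y hy hxy
    simp only [Function.comp, hρab, E, Sym2.lift_mk]
    exact ⟨C5edge_mem_C5edges ha hb hab h01ab, hxe, hye⟩

theorem stmt6_general (k l : ℕ) (hl : 5 ≤ l) (X : Finset ℕ)
    (hX : X ⊆ C5verts k l) (hXcard : X.card = l - 1) :
    HasBergeCliqueOn (C5edges k l) X := by
  obtain ⟨ψ, hinj, hmaps, hfix⟩ :=
    exists_injOn_mapsTo_of_card_le (X := X) (A := range l) (by rw [card_range]; omega)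
  obtain ⟨m, hm, hmψ⟩ : ∃ m ∈ range l, m ∉ X.image ψ :=
    exists_mem_notMem_of_card_lt_card (by rw [card_image_of_injOn hinj, card_range]; omega)
  refine (hasBergeCliqueOn_C5edges_erase k hl (mem_range.mp hm)).of_injOn hinj
    (fun x hx => mem_erase.mpr ⟨?_, hmaps hx⟩) (fun x hx e he hxe => ?_)
  · rintro rfl
    exact hmψ (mem_image_of_mem ψ hx)
  · by_cases hxl : x < l
    · rwa [hfix x (mem_range.mpr hxl)] at hxe
    · exact Ico_subset_of_mem_C5edges he
        (mem_Ico.mpr ⟨by omega, by simpa [C5verts] using hX hx⟩)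

/-- for `k ≥ 3`, `ℓ ≥ 5`, every set of `ℓ − 1` vertices of `C(k,ℓ)` is
the set of core vertices of a Berge-`K_{ℓ−1}` in `C(k,ℓ)`. -/
theorem stmt6 (k l : ℕ) (hk : 3 ≤ k) (hl : 5 ≤ l) (X : Finset ℕ)
    (hX : X ⊆ C5verts k l) (hXcard : X.card = l - 1) :
    HasBergeCliqueOn (C5edges k l) X :=
  stmt6_general k l hl X hX hXcard
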